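/- arXiv:0803.2283 — 6 statements merged into one kernel-verified Lean document; each statement's English description precedes it below -/
import Mathlib

section
/- Let R be a coherent risk functional and suppose there exist two assets j and k such that the return of asset j strictly exceeds the return of asset k at every observation, i.e. x_{jt} > x_{kt} for all t = 1,…,T. Then the global risk minimization problem min ρ̂(w|X) over normalized portfolios w has no solution: there is no normalized portfolio w₀ with ρ̂(w₀|X) ≤ ρ̂(w|X) for all normalized w, and moreover inf{ρ̂(w|X) : w normalized} = −∞. -/
/-!
Let `d = x_j - x_k > 0`. Shifting the weight `c` from asset `k` to asset `j` keeps the portfolio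
normalized and changes its return from `x_k` to `x_k + c d`. On finitely many observations
`c d ≥ a` for any prescribed `a` once `c` is large, so monotonicity and cash invariance give
`ρ̂ ≤ R(x_k) - a`: the estimated risk is unbounded below, and then no portfolio can minimize it.
-/

def IsCoherent {T : ℕ} (R : (Fin T → ℝ) → ℝ) : Prop :=
  (∀ y z : Fin T → ℝ, (∀ t, z t ≤ y t) → R y ≤ R z) ∧
  (∀ y z : Fin T → ℝ, R (y + z) ≤ R y + R z) ∧
  (∀ (a : ℝ) (y : Fin T → ℝ), 0 < a → R (a • y) = a * R y) ∧
  (∀ (a : ℝ) (y : Fin T → ℝ), R (y + fun _ => a) = R y - a)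

open Finset

section RiskFunctional

variable {ι : Type*} (R : (ι → ℝ) → ℝ)
  (hmono : ∀ y z : ι → ℝ, (∀ t, z t ≤ y t) → R y ≤ R z)
  (hcash : ∀ (a : ℝ) (y : ι → ℝ), R (y + fun _ => a) = R y - a)
include hmono hcash

theorem risk_le_sub_of_add_le {y z : ι → ℝ} {a : ℝ} (h : ∀ t, z t + a ≤ y t) :
    R y ≤ R z - a :=
  hcash a z ▸ hmono y _ h

theorem exists_risk_add_smul_lt [Finite ι] {d : ι → ℝ} (hd : ∀ t, 0 < d t) (z : ι → ℝ)
    (M : ℝ) : ∃ c : ℝ, R (z + c • d) < M := by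
  set a := R z - M + 1
  obtain ⟨c, hc⟩ := Finite.exists_le fun t => a / d t
  refine ⟨c, ?_⟩
  have hgain : ∀ t, z t + a ≤ (z + c • d) t := fun t => by
    have : a ≤ c * d t := (div_le_iff₀ (hd t)).mp (hc t)
    simp only [Pi.add_apply, Pi.smul_apply, smul_eq_mul]
    linarith
  linarith [risk_le_sub_of_add_le R hmono hcash hgain]

end RiskFunctional

section Portfolio

variable {ι α : Type*} [Fintype ι] [DecidableEq ι]

def shiftPortfolio (k j : ι) (c : ℝ) : ι → ℝ :=
  Pi.single k 1 + c • (Pi.single j 1 - Pi.single k 1)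

theorem sum_shiftPortfolio (k j : ι) (c : ℝ) : ∑ i, shiftPortfolio k j c i = 1 := by
  simp [shiftPortfolio, sum_add_distrib, sum_sub_distrib, ← mul_sum]

theorem return_shiftPortfolio (X : ι → α → ℝ) (k j : ι) (c : ℝ) :
    (fun t => ∑ i, shiftPortfolio k j c i * X i t) = X k + c • (X j - X k) := by
  ext t
  simp [shiftPortfolio, add_mul, sub_mul, mul_assoc, sum_add_distrib, sum_sub_distrib, ← mul_sum,
    Pi.single_apply]

end Portfolio

theorem no_solution_of_dominant_asset_general {N T : ℕ}
    (X : Fin N → Fin T → ℝ) (R : (Fin T → ℝ) → ℝ) (hR : IsCoherent R)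
    (j k : Fin N) (hjk : ∀ t, X k t < X j t) :
    (¬ ∃ w₀ : Fin N → ℝ, (∑ i, w₀ i = 1) ∧
        ∀ w : Fin N → ℝ, (∑ i, w i = 1) →
          R (fun t => ∑ i, w₀ i * X i t) ≤ R (fun t => ∑ i, w i * X i t)) ∧
    (∀ M : ℝ, ∃ w : Fin N → ℝ, (∑ i, w i = 1) ∧
        R (fun t => ∑ i, w i * X i t) < M) := by
  obtain ⟨hmono, -, -, hcash⟩ := hR
  have unbounded : ∀ M : ℝ, ∃ w : Fin N → ℝ, (∑ i, w i = 1) ∧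
      R (fun t => ∑ i, w i * X i t) < M := fun M => by
    obtain ⟨c, hc⟩ := exists_risk_add_smul_lt R hmono hcash (fun t => sub_pos.2 (hjk t)) (X k) M
    exact ⟨shiftPortfolio k j c, sum_shiftPortfolio k j c, return_shiftPortfolio X k j c ▸ hc⟩
  refine ⟨fun ⟨w₀, _, hmin⟩ => ?_, unbounded⟩
  obtain ⟨w, hw, hlt⟩ := unbounded (R fun t => ∑ i, w₀ i * X i t)
  exact (hmin w hw).not_gt hlt

/-- If some asset `j` strictly outperforms some asset `k` at every observation of the
sample `X`, then the minimization of a coherent risk estimator over normalized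
portfolios has no solution, and the estimated risk is unbounded from below. -/
theorem no_solution_of_dominant_asset {N T : ℕ} (hN : 1 ≤ N) (hT : 1 ≤ T)
    (X : Fin N → Fin T → ℝ) (R : (Fin T → ℝ) → ℝ) (hR : IsCoherent R)
    (j k : Fin N) (hjk : ∀ t, X k t < X j t) :
    (¬ ∃ w₀ : Fin N → ℝ, (∑ i, w₀ i = 1) ∧
        ∀ w : Fin N → ℝ, (∑ i, w i = 1) →
          R (fun t => ∑ i, w₀ i * X i t) ≤ R (fun t => ∑ i, w i * X i t)) ∧
    (∀ M : ℝ, ∃ w : Fin N → ℝ, (∑ i, w i = 1) ∧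
        R (fun t => ∑ i, w i * X i t) < M) :=
  no_solution_of_dominant_asset_general X R hR j k hjk
end

section
/- (Theorem 1.) Let R be a coherent risk functional on the sample X. If there exist two normalized portfolios u and v such that u strictly dominates v on X at every observation, then the global risk minimization problem min ρ̂(w|X) subject to ∑_i w_i = 1 has no solution: there is no normalized portfolio w₀ such that ρ̂(w₀|X) ≤ ρ̂(w|X) for all normalized portfolios w. -/
/-!
If `w₀` were optimal, `w₀ + u - v` would be normalized too and would beat `w₀` at every
observation by at least some `δ > 0` (there are finitely many observations). By monotonicity and
cash invariance its risk is then at most `ρ̂(w₀|X) - δ`.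
-/

open Filter Topology Finset

theorem exists_pos_forall_lt_of_forall_pos {ι : Type*} [Finite ι] {f : ι → ℝ}
    (hf : ∀ i, 0 < f i) : ∃ δ > 0, ∀ i, δ < f i := by
  have hsmall : ∀ᶠ δ in 𝓝[>] (0 : ℝ), ∀ i, δ < f i :=
    eventually_all.2 fun i => nhdsWithin_le_nhds (eventually_lt_nhds (hf i))
  obtain ⟨δ, hδf, hδ⟩ := (hsmall.and self_mem_nhdsWithin).exists
  exact ⟨δ, hδ, hδf⟩

theorem Antitone.apply_lt_apply_of_forall_lt {ι : Type*} [Finite ι] {R : (ι → ℝ) → ℝ}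
    (hR : Antitone R) (hcash : ∀ (a : ℝ) (y : ι → ℝ), R (y + fun _ => a) = R y - a)
    {y z : ι → ℝ} (hyz : ∀ i, y i < z i) : R z < R y := by
  obtain ⟨δ, hδ, hδz⟩ := exists_pos_forall_lt_of_forall_pos fun i => sub_pos.2 (hyz i)
  calc R z ≤ R (y + fun _ => δ) := hR fun i => by simp only [Pi.add_apply]; linarith [hδz i]
    _ = R y - δ := hcash δ y
    _ < R y := sub_lt_self _ hδ

theorem no_solution_of_strictly_dominating_pair_general {N T : ℕ}
    (X : Fin N → Fin T → ℝ) (R : (Fin T → ℝ) → ℝ) (hR : IsCoherent R)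
    (u v : Fin N → ℝ) (hu : ∑ i, u i = 1) (hv : ∑ i, v i = 1)
    (hdom : ∀ t, ∑ i, v i * X i t < ∑ i, u i * X i t) :
    ¬ ∃ w₀ : Fin N → ℝ, (∑ i, w₀ i = 1) ∧
        ∀ w : Fin N → ℝ, (∑ i, w i = 1) →
          R (fun t => ∑ i, w₀ i * X i t) ≤ R (fun t => ∑ i, w i * X i t) := by
  rintro ⟨w₀, hw₀, hmin⟩
  have hnormalized : ∑ i, (w₀ i + u i - v i) = 1 := by
    simp only [sum_sub_distrib, sum_add_distrib, hw₀, hu, hv]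
    ring
  have hbetter : ∀ t, ∑ i, w₀ i * X i t < ∑ i, (w₀ i + u i - v i) * X i t := fun t => by
    simp only [add_mul, sub_mul, sum_add_distrib, sum_sub_distrib]
    linarith [hdom t]
  have hanti : Antitone R := fun y z hyz => hR.1 z y hyz
  exact (hmin _ hnormalized).not_gt (hanti.apply_lt_apply_of_forall_lt hR.2.2.2 hbetter)

/-- Theorem 1: if a normalized portfolio `u` strictly dominates a normalized portfolio `v`
at every observation of the sample `X`, then the minimization of a coherent risk
estimator over normalized portfolios has no solution. -/
theorem no_solution_of_strictly_dominating_pair {N T : ℕ} (hN : 1 ≤ N) (hT : 1 ≤ T)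
    (X : Fin N → Fin T → ℝ) (R : (Fin T → ℝ) → ℝ) (hR : IsCoherent R)
    (u v : Fin N → ℝ) (hu : ∑ i, u i = 1) (hv : ∑ i, v i = 1)
    (hdom : ∀ t, ∑ i, v i * X i t < ∑ i, u i * X i t) :
    ¬ ∃ w₀ : Fin N → ℝ, (∑ i, w₀ i = 1) ∧
        ∀ w : Fin N → ℝ, (∑ i, w i = 1) →
          R (fun t => ∑ i, w₀ i * X i t) ≤ R (fun t => ∑ i, w i * X i t) :=
  no_solution_of_strictly_dominating_pair_general X R hR u v hu hv hdom
end

section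
/- (Theorem 1, strengthened form from its proof.) Let R be a coherent risk functional on the sample X. If there exist two normalized portfolios u and v such that u strictly dominates v on X at every observation, then the estimated risk is unbounded from below on normalized portfolios: for every M ∈ ℝ there exists a normalized portfolio w with ρ̂(w|X) < M. -/
theorem exists_pos_forall_le_of_forall_pos {ι : Type*} [Finite ι] {d : ι → ℝ}
    (hd : ∀ t, 0 < d t) : ∃ δ > 0, ∀ t, δ ≤ d t := by
  cases isEmpty_or_nonempty ι
  · exact ⟨1, one_pos, isEmptyElim⟩
  · obtain ⟨t₀, ht₀⟩ := Finite.exists_min d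
    exact ⟨d t₀, hd t₀, ht₀⟩

namespace IsCoherent

variable {T : ℕ} {R : (Fin T → ℝ) → ℝ}

theorem antitone (hR : IsCoherent R) : Antitone R :=
  fun y z hyz => hR.1 z y hyz

theorem map_add_const (hR : IsCoherent R) (y : Fin T → ℝ) (a : ℝ) :
    R (y + fun _ => a) = R y - a :=
  hR.2.2.2 a y

theorem map_add_smul_le (hR : IsCoherent R) (y : Fin T → ℝ) {d : Fin T → ℝ} {δ c : ℝ}
    (hδ : ∀ t, δ ≤ d t) (hc : 0 ≤ c) : R (y + c • d) ≤ R y - c * δ := by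
  calc R (y + c • d) ≤ R (y + fun _ => c * δ) :=
        hR.antitone fun t => by simpa using mul_le_mul_of_nonneg_left (hδ t) hc
    _ = R y - c * δ := hR.map_add_const y _

theorem exists_map_add_smul_lt (hR : IsCoherent R) (y : Fin T → ℝ) {d : Fin T → ℝ}
    (hd : ∀ t, 0 < d t) (M : ℝ) : ∃ c : ℝ, R (y + c • d) < M := by
  obtain ⟨δ, hδ_pos, hδ⟩ := exists_pos_forall_le_of_forall_pos hd
  obtain ⟨n, hn⟩ := exists_nat_gt ((R y - M) / δ)
  refine ⟨n, (hR.map_add_smul_le y hδ n.cast_nonneg).trans_lt ?_⟩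
  linarith [(div_lt_iff₀ hδ_pos).1 hn]

end IsCoherent

theorem sum_add_smul_sub_eq_one {ι : Type*} [Fintype ι] {u v : ι → ℝ}
    (hu : ∑ i, u i = 1) (hv : ∑ i, v i = 1) (c : ℝ) : ∑ i, (v + c • (u - v)) i = 1 := by
  simp [Finset.sum_add_distrib, ← Finset.mul_sum, hu, hv]

theorem sum_add_smul_sub_mul {ι : Type*} [Fintype ι] (u v x : ι → ℝ) (c : ℝ) :
    ∑ i, (v + c • (u - v)) i * x i = ∑ i, v i * x i + c * (∑ i, u i * x i - ∑ i, v i * x i) := by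
  simp only [Pi.add_apply, Pi.smul_apply, Pi.sub_apply, smul_eq_mul, add_mul, mul_assoc, sub_mul,
    Finset.sum_add_distrib, ← Finset.mul_sum, Finset.sum_sub_distrib]

theorem unbounded_below_of_strictly_dominating_pair_general {N T : ℕ}
    (X : Fin N → Fin T → ℝ) (R : (Fin T → ℝ) → ℝ) (hR : IsCoherent R)
    (u v : Fin N → ℝ) (hu : ∑ i, u i = 1) (hv : ∑ i, v i = 1)
    (hdom : ∀ t, ∑ i, v i * X i t < ∑ i, u i * X i t) :
    ∀ M : ℝ, ∃ w : Fin N → ℝ, (∑ i, w i = 1) ∧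
        R (fun t => ∑ i, w i * X i t) < M := by
  intro M
  obtain ⟨c, hc⟩ := hR.exists_map_add_smul_lt (fun t => ∑ i, v i * X i t)
    (d := fun t => ∑ i, u i * X i t - ∑ i, v i * X i t) (fun t => sub_pos.2 (hdom t)) M
  refine ⟨v + c • (u - v), sum_add_smul_sub_eq_one hu hv c, ?_⟩
  convert hc using 2
  funext t
  exact sum_add_smul_sub_mul u v (X · t) c

/-- Theorem 1, strengthened form: if a normalized portfolio `u` strictly dominates a
normalized portfolio `v` at every observation of the sample `X`, then the coherent risk
estimator is unbounded from below on normalized portfolios. -/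
theorem unbounded_below_of_strictly_dominating_pair {N T : ℕ} (hN : 1 ≤ N) (hT : 1 ≤ T)
    (X : Fin N → Fin T → ℝ) (R : (Fin T → ℝ) → ℝ) (hR : IsCoherent R)
    (u v : Fin N → ℝ) (hu : ∑ i, u i = 1) (hv : ∑ i, v i = 1)
    (hdom : ∀ t, ∑ i, v i * X i t < ∑ i, u i * X i t) :
    ∀ M : ℝ, ∃ w : Fin N → ℝ, (∑ i, w i = 1) ∧
        R (fun t => ∑ i, w i * X i t) < M :=
  unbounded_below_of_strictly_dominating_pair_general X R hR u v hu hv hdom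
end

section
/- (Theorem 2.) The Minimax (Maximal Loss) optimization problem min ML(w|X) subject to ∑_i w_i = 1 has no solution (i.e. there is no normalized portfolio w₀ with ML(w₀|X) ≤ ML(w|X) for all normalized portfolios w) if and only if there exists a pair of normalized portfolios u, v such that u strictly dominates v on X at every observation. -/
/-!
Normalized portfolios form an affine subspace `v₀ + ker σ`. A dominating pair gives a direction in
`ker σ` along which every loss strictly decreases, so no portfolio is optimal. Conversely, if there
is no such direction, minimize `⨆ t, y t + A e t` over `e` by induction on the number of
observations. If some `A d₀ ≠ 0` is nowhere positive, adding a large multiple of `d₀` pushes the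
observations where `A d₀ < 0` below any level, so it suffices to solve the problem on the
(nonempty, smaller) zero set of `A d₀`. Otherwise the range of `A` meets the nonpositive orthant
only in `0`; by compactness of its unit sphere `⨆ t, v t ≥ ε ‖v‖` there, so the objective is
coercive and attains its minimum.
-/

/-- The Maximal Loss (Minimax) objective of the portfolio `w` on the sample `X`:
the largest loss `-∑ i, w i * X i t` over the observations `t`. -/
noncomputable def ML {N T : ℕ} (X : Fin N → Fin T → ℝ) (w : Fin N → ℝ) : ℝ :=
  ⨆ t, -(∑ i, w i * X i t)

open Filter

section

variable {ι E : Type*} [AddCommGroup E] [Module ℝ E]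

theorem ciSup_add_lt_ciSup [Finite ι] [Nonempty ι] (f g : ι → ℝ) (hg : ∀ t, g t < 0) :
    ⨆ t, (f t + g t) < ⨆ t, f t := by
  obtain ⟨t, ht⟩ := exists_eq_ciSup_of_finite (f := fun t => f t + g t)
  rw [← ht]
  exact (add_lt_of_neg_right _ (hg t)).trans_le (le_ciSup (Finite.bddAbove_range f) t)

theorem eventually_forall_add_mul_lt [Finite ι] (c g : ι → ℝ) (M : ℝ) :
    ∀ᶠ s in atTop, ∀ t, g t < 0 → c t + s * g t < M := by
  refine eventually_all.2 fun t => ?_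
  by_cases ht : g t < 0
  · have : Tendsto (fun s => c t + s * g t) atTop atBot :=
      tendsto_atBot_add_const_left _ _ (tendsto_id.atTop_mul_const_of_neg ht)
    exact (this.eventually (eventually_lt_atBot M)).mono fun _ h _ => h
  · exact Eventually.of_forall fun _ h => absurd h ht

theorem continuous_ciSup_apply [Finite ι] [Nonempty ι] :
    Continuous fun v : ι → ℝ => ⨆ t, v t := by
  cases nonempty_fintype ι
  simp_rw [← Finset.sup'_univ_eq_ciSup]
  fun_prop

theorem exists_pos_mul_norm_le {V : Type*} [NormedAddCommGroup V] [NormedSpace ℝ V]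
    [FiniteDimensional ℝ V] {p : V → ℝ} (hp : Continuous p)
    (hsmul : ∀ (c : ℝ) v, 0 ≤ c → p (c • v) = c * p v) (hpos : ∀ v, v ≠ 0 → 0 < p v) :
    ∃ ε > 0, ∀ v, ε * ‖v‖ ≤ p v := by
  have hp0 : p 0 = 0 := by simpa using hsmul 0 0 le_rfl
  cases subsingleton_or_nontrivial V
  · exact ⟨1, one_pos, fun v => by simp [Subsingleton.elim v 0, hp0]⟩
  obtain ⟨u, hu, hmin⟩ := (isCompact_sphere (0 : V) 1).exists_isMinOn
    (NormedSpace.sphere_nonempty.2 zero_le_one) hp.continuousOn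
  refine ⟨p u, hpos u (ne_zero_of_mem_unit_sphere ⟨u, hu⟩), fun v => ?_⟩
  rcases eq_or_ne v 0 with rfl | hv
  · simp [hp0]
  have hv' : 0 < ‖v‖ := norm_pos_iff.2 hv
  have hunit : ‖v‖⁻¹ • v ∈ Metric.sphere (0 : V) 1 := by
    simp [norm_smul, hv'.ne']
  calc p u * ‖v‖ ≤ p (‖v‖⁻¹ • v) * ‖v‖ := by gcongr; exact hmin hunit
    _ = p v := by rw [hsmul _ _ (by positivity)]; field_simp

theorem exists_forall_ciSup_add_le_of_pointed [Finite ι] [Nonempty ι] (A : E →ₗ[ℝ] ι → ℝ)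
    (y : ι → ℝ) (hA : ∀ d, (∀ t, A d t ≤ 0) → A d = 0) :
    ∃ e₀, ∀ e, ⨆ t, (y t + A e₀ t) ≤ ⨆ t, (y t + A e t) := by
  cases nonempty_fintype ι
  set V := LinearMap.range A
  obtain ⟨ε, hε, hcoer⟩ : ∃ ε > 0, ∀ v : V, ε * ‖v‖ ≤ ⨆ t, (v : ι → ℝ) t := by
    refine exists_pos_mul_norm_le (continuous_ciSup_apply.comp continuous_subtype_val)
      (fun c v hc => (Real.mul_iSup_of_nonneg hc _).symm) fun v hv => ?_
    obtain ⟨d, hd⟩ := v.2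
    obtain ⟨t, ht⟩ : ∃ t, 0 < A d t := by
      by_contra! h
      exact hv (Subtype.ext (hd ▸ hA d h))
    exact ht.trans_le (hd ▸ le_ciSup (Finite.bddAbove_range _) t)
  set F : V → ℝ := fun v => ⨆ t, (y t + (v : ι → ℝ) t)
  have hF : Continuous F :=
    continuous_ciSup_apply.comp (continuous_const.add continuous_subtype_val)
  have hbound : ∀ v : V, ε * ‖v‖ - ‖y‖ ≤ F v := by
    intro v
    obtain ⟨t, ht⟩ := exists_eq_ciSup_of_finite (f := (v : ι → ℝ))
    have hy : -‖y‖ ≤ y t := neg_le_of_abs_le ((Real.norm_eq_abs _).symm ▸ norm_le_pi_norm y t)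
    have := le_ciSup (Finite.bddAbove_range fun t => y t + (v : ι → ℝ) t) t
    linarith [hcoer v]
  have htend : Tendsto F (cocompact V) atTop :=
    tendsto_atTop_mono hbound (tendsto_atTop_add_const_right _ _
      (tendsto_norm_cocompact_atTop.const_mul_atTop hε))
  obtain ⟨⟨_, e₀, rfl⟩, hmin⟩ := hF.exists_forall_le htend
  exact ⟨e₀, fun e => hmin ⟨A e, e, rfl⟩⟩

theorem not_exists_forall_restrict_neg [Finite ι] (A : E →ₗ[ℝ] ι → ℝ)
    (hA : ¬∃ d, ∀ t, A d t < 0) {d₀ : E} (hd₀ : ∀ t, A d₀ t ≤ 0) :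
    ¬∃ d, ∀ t, A d₀ t = 0 → A d t < 0 := by
  rintro ⟨d, hd⟩
  obtain ⟨s, hs⟩ := (eventually_forall_add_mul_lt (A d) (A d₀) 0).exists
  refine hA ⟨d + s • d₀, fun t => ?_⟩
  rcases (hd₀ t).lt_or_eq with ht | ht
  · simpa using hs t ht
  · simpa [ht] using hd t ht

theorem exists_forall_ciSup_add_le_of_restrict [Finite ι] (A : E →ₗ[ℝ] ι → ℝ) (y : ι → ℝ)
    {d₀ : E} (hd₀ : ∀ t, A d₀ t ≤ 0) [Nonempty {t // A d₀ t = 0}] {e₀ : E}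
    (he₀ : ∀ e, ⨆ z : {t // A d₀ t = 0}, (y z + A e₀ z) ≤
      ⨆ z : {t // A d₀ t = 0}, (y z + A e z)) :
    ∃ e₁, ∀ e, ⨆ t, (y t + A e₁ t) ≤ ⨆ t, (y t + A e t) := by
  set M := ⨆ z : {t // A d₀ t = 0}, (y z + A e₀ z)
  obtain ⟨s, hs⟩ := (eventually_forall_add_mul_lt (fun t => y t + A e₀ t) (A d₀) M).exists
  refine ⟨e₀ + s • d₀, fun e => ?_⟩
  have : Nonempty ι := ⟨(Classical.arbitrary {t // A d₀ t = 0}).1⟩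
  calc ⨆ t, (y t + A (e₀ + s • d₀) t) ≤ M := ciSup_le fun t => by
        rcases (hd₀ t).lt_or_eq with ht | ht
        · simpa [add_assoc] using (hs t ht).le
        · simpa [ht] using le_ciSup (Finite.bddAbove_range fun z : {t // A d₀ t = 0} =>
            y z + A e₀ z) ⟨t, ht⟩
    _ ≤ ⨆ z : {t // A d₀ t = 0}, (y z + A e z) := he₀ e
    _ ≤ ⨆ t, (y t + A e t) := ciSup_le fun z =>
        le_ciSup (Finite.bddAbove_range fun t => y t + A e t) z.1

theorem exists_forall_ciSup_add_le [Finite ι] [Nonempty ι] (A : E →ₗ[ℝ] ι → ℝ) (y : ι → ℝ)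
    (hA : ¬∃ d, ∀ t, A d t < 0) :
    ∃ e₀, ∀ e, ⨆ t, (y t + A e₀ t) ≤ ⨆ t, (y t + A e t) := by
  induction h : Nat.card ι using Nat.strong_induction_on generalizing ι with
  | _ n ih =>
  by_cases! hpointed : ∀ d, (∀ t, A d t ≤ 0) → A d = 0
  · exact exists_forall_ciSup_add_le_of_pointed A y hpointed
  obtain ⟨d₀, hd₀, hne⟩ := hpointed
  obtain ⟨t₁, ht₁⟩ := Function.ne_iff.1 hne
  have : Nonempty {t // A d₀ t = 0} := by
    by_contra! h
    exact hA ⟨d₀, fun t => (hd₀ t).lt_of_ne fun ht => h.false ⟨t, ht⟩⟩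
  obtain ⟨e₀, he₀⟩ := ih _ (h ▸ Finite.card_subtype_lt ht₁)
    (LinearMap.funLeft ℝ ℝ Subtype.val ∘ₗ A) (y ∘ Subtype.val)
    (not_exists_forall_restrict_neg A hA hd₀ ∘ fun ⟨d, hd⟩ => ⟨d, fun t ht => hd ⟨t, ht⟩⟩) rfl
  exact exists_forall_ciSup_add_le_of_restrict A y hd₀ he₀

variable {F : Type*} [AddCommGroup F] [Module ℝ F]

theorem exists_forall_ciSup_le_iff [Finite ι] [Nonempty ι] (A : E →ₗ[ℝ] ι → ℝ)
    (σ : E →ₗ[ℝ] F) {c : F} (hc : ∃ v, σ v = c) :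
    (∃ w₀, σ w₀ = c ∧ ∀ w, σ w = c → ⨆ t, A w₀ t ≤ ⨆ t, A w t) ↔
      ¬∃ u v, σ u = c ∧ σ v = c ∧ ∀ t, A u t < A v t := by
  obtain ⟨v₀, rfl⟩ := hc
  constructor
  · rintro ⟨w₀, hw₀, hmin⟩ ⟨u, v, hu, hv, hlt⟩
    refine (hmin (w₀ + (u - v)) (by simp [hw₀, hu, hv])).not_gt ?_
    simpa using ciSup_add_lt_ciSup (A w₀) _ fun t => sub_neg.2 (hlt t)
  · intro hno
    obtain ⟨e₀, he₀⟩ := exists_forall_ciSup_add_le (A ∘ₗ (LinearMap.ker σ).subtype) (A v₀)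
      fun ⟨d, hd⟩ => hno ⟨v₀ + d, v₀, by simp, rfl, fun t => by simpa using hd t⟩
    refine ⟨v₀ + e₀, by simp, fun w hw => ?_⟩
    simpa using he₀ ⟨w - v₀, by simp [hw]⟩

end

/-- Theorem 2: the Minimax problem over normalized portfolios has no solution
if and only if there is a pair of normalized portfolios such that one strictly
dominates the other at every observation of the sample. -/
theorem minimax_no_solution_iff_strictly_dominating_pair {N T : ℕ} (hN : 1 ≤ N)
    (hT : 1 ≤ T) (X : Fin N → Fin T → ℝ) :
    (¬ ∃ w₀ : Fin N → ℝ, (∑ i, w₀ i = 1) ∧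
        ∀ w : Fin N → ℝ, (∑ i, w i = 1) → ML X w₀ ≤ ML X w) ↔
    (∃ u v : Fin N → ℝ, (∑ i, u i = 1) ∧ (∑ i, v i = 1) ∧
        ∀ t, ∑ i, v i * X i t < ∑ i, u i * X i t) := by
  have : Nonempty (Fin T) := ⟨⟨0, hT⟩⟩
  have h := exists_forall_ciSup_le_iff (-Matrix.vecMulLinear X) (∑ i, LinearMap.proj i)
    (c := 1) ⟨Pi.single ⟨0, hN⟩ 1, by simp⟩
  simp only [LinearMap.neg_apply, Pi.neg_apply, neg_lt_neg_iff, LinearMap.sum_apply,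
    LinearMap.coe_proj, Function.eval] at h
  exact (iff_not_comm.1 h).symm
end

section
/- (Theorem 2, unboundedness form.) The Maximal Loss objective is unbounded from below over normalized portfolios, i.e. inf{ML(w|X) : w normalized} = −∞, if and only if there exists a pair of normalized portfolios u, v such that u strictly dominates v on X at every observation. -/
/-!
Along the line `w c = v + c (u - v)` through two normalized portfolios, every `w c` is
normalized and its return at observation `t` is affine in `c` with slope `r_u t - r_v t`.
If `u` strictly dominates `v`, all slopes are positive, so for large `c` every loss of `w c`
is below any given level. Conversely, if the Maximal Loss can be made smaller than minus the
best return of some normalized `v`, the portfolio achieving it strictly dominates `v`.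
-/

open Filter

theorem sum_add_mul_sub_mul {ι : Type*} [Fintype ι] (u v x : ι → ℝ) (c : ℝ) :
    ∑ i, (v i + c * (u i - v i)) * x i
      = ∑ i, v i * x i + c * (∑ i, u i * x i - ∑ i, v i * x i) := by
  simp only [add_mul, mul_assoc, sub_mul, Finset.sum_add_distrib, ← Finset.mul_sum,
    Finset.sum_sub_distrib]

theorem sum_add_mul_sub_eq_one {ι : Type*} [Fintype ι] {u v : ι → ℝ}
    (hu : ∑ i, u i = 1) (hv : ∑ i, v i = 1) (c : ℝ) :
    ∑ i, (v i + c * (u i - v i)) = 1 := by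
  simpa [hu, hv] using sum_add_mul_sub_mul u v (fun _ ↦ 1) c

theorem exists_forall_lt_add_mul {τ : Type*} [Finite τ] (a b : τ → ℝ) (hb : ∀ t, 0 < b t)
    (M : ℝ) : ∃ c : ℝ, ∀ t, M < a t + c * b t := by
  have : ∀ᶠ c in atTop, ∀ t, M < a t + c * b t := eventually_all.2 fun t ↦
    (tendsto_atTop_add_const_left _ _ (tendsto_id.atTop_mul_const (hb t))).eventually_gt_atTop M
  exact this.exists

theorem neg_sum_mul_le_ML {N T : ℕ} (X : Fin N → Fin T → ℝ) (w : Fin N → ℝ) (t : Fin T) :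
    -(∑ i, w i * X i t) ≤ ML X w :=
  le_ciSup (f := fun t ↦ -(∑ i, w i * X i t)) (Set.finite_range _).bddAbove t

theorem ML_lt_iff {N T : ℕ} [NeZero T] (X : Fin N → Fin T → ℝ) (w : Fin N → ℝ) (M : ℝ) :
    ML X w < M ↔ ∀ t, -(∑ i, w i * X i t) < M := by
  refine ⟨fun h t ↦ (neg_sum_mul_le_ML X w t).trans_lt h, fun h ↦ ?_⟩
  obtain ⟨t₀, ht₀⟩ := exists_eq_ciSup_of_finite (f := fun t ↦ -(∑ i, w i * X i t))
  rw [ML, ← ht₀]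
  exact h t₀

theorem minimax_unbounded_iff_strictly_dominating_pair_general {N T : ℕ}
    (hT : 1 ≤ T) (X : Fin N → Fin T → ℝ) :
    (∀ M : ℝ, ∃ w : Fin N → ℝ, (∑ i, w i = 1) ∧ ML X w < M) ↔
    (∃ u v : Fin N → ℝ, (∑ i, u i = 1) ∧ (∑ i, v i = 1) ∧
        ∀ t, ∑ i, v i * X i t < ∑ i, u i * X i t) := by
  constructor
  · intro h
    obtain ⟨v, hv, -⟩ := h 0
    obtain ⟨S, hS⟩ := (Set.finite_range fun t ↦ ∑ i, v i * X i t).bddAbove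
    obtain ⟨w, hw, hwS⟩ := h (-S)
    refine ⟨w, v, hw, hv, fun t ↦ ?_⟩
    have hvS : ∑ i, v i * X i t ≤ S := hS ⟨t, rfl⟩
    linarith [neg_sum_mul_le_ML X w t]
  · rintro ⟨u, v, hu, hv, hdom⟩ M
    have : NeZero T := ⟨by omega⟩
    obtain ⟨c, hc⟩ := exists_forall_lt_add_mul (fun t ↦ ∑ i, v i * X i t)
      (fun t ↦ ∑ i, u i * X i t - ∑ i, v i * X i t) (fun t ↦ sub_pos.2 (hdom t)) (-M)
    refine ⟨fun i ↦ v i + c * (u i - v i), sum_add_mul_sub_eq_one hu hv c,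
      (ML_lt_iff X _ M).2 fun t ↦ ?_⟩
    rw [sum_add_mul_sub_mul]
    linarith [hc t]

/-- Theorem 2, unboundedness form: the Maximal Loss objective is unbounded from below
over normalized portfolios if and only if there is a pair of normalized portfolios such
that one strictly dominates the other at every observation of the sample. -/
theorem minimax_unbounded_iff_strictly_dominating_pair {N T : ℕ} (hN : 1 ≤ N)
    (hT : 1 ≤ T) (X : Fin N → Fin T → ℝ) :
    (∀ M : ℝ, ∃ w : Fin N → ℝ, (∑ i, w i = 1) ∧ ML X w < M) ↔
    (∃ u v : Fin N → ℝ, (∑ i, u i = 1) ∧ (∑ i, v i = 1) ∧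
        ∀ t, ∑ i, v i * X i t < ∑ i, u i * X i t) :=
  minimax_unbounded_iff_strictly_dominating_pair_general hT X
end

section
/- (Corollary 2, abstract probabilistic form.) Let (Ω, F, P) be a probability space and let X : Ω → (Fin N → Fin T → ℝ) be a random sample of returns. Let R be a coherent risk functional. Define D = {ω ∈ Ω : there exist normalized portfolios u, v with ∑_i u_i X(ω)_{it} > ∑_i v_i X(ω)_{it} for all t} and U = {ω ∈ Ω : the minimization of ρ̂(·|X(ω)) over normalized portfolios has no solution}. Then D ⊆ U; consequently, if D and U are measurable, the probability that the portfolio optimization problem under R is unfeasible on the sample is at least the probability that a strictly dominating pair of portfolios exists: P(U) ≥ P(D). -/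
open Matrix

theorem risk_lt_of_forall_lt {ι : Type*} [Finite ι] [Nonempty ι] {R : (ι → ℝ) → ℝ}
    (hmono : ∀ y z : ι → ℝ, (∀ t, z t ≤ y t) → R y ≤ R z)
    (hcash : ∀ (a : ℝ) (y : ι → ℝ), R (y + fun _ => a) = R y - a)
    {y z : ι → ℝ} (hyz : ∀ t, y t < z t) : R z < R y := by
  obtain ⟨t₀, ht₀⟩ := Finite.exists_min fun t => z t - y t
  have hgap : 0 < z t₀ - y t₀ := sub_pos.mpr (hyz t₀)
  calc R z ≤ R (y + fun _ => z t₀ - y t₀) := hmono _ _ fun t => by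
          simpa [le_sub_iff_add_le'] using ht₀ t
    _ = R y - (z t₀ - y t₀) := hcash _ _
    _ < R y := sub_lt_self _ hgap

theorem exists_risk_lt_of_strictly_dominates {ι τ : Type*} [Fintype ι] [Finite τ] [Nonempty τ]
    {R : (τ → ℝ) → ℝ} (hmono : ∀ y z : τ → ℝ, (∀ t, z t ≤ y t) → R y ≤ R z)
    (hcash : ∀ (a : ℝ) (y : τ → ℝ), R (y + fun _ => a) = R y - a)
    {X : Matrix ι τ ℝ} {u v : ι → ℝ} (hu : ∑ i, u i = 1) (hv : ∑ i, v i = 1)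
    (hdom : ∀ t, (v ᵥ* X) t < (u ᵥ* X) t) (w₀ : ι → ℝ) (hw₀ : ∑ i, w₀ i = 1) :
    ∃ w : ι → ℝ, ∑ i, w i = 1 ∧ R (w ᵥ* X) < R (w₀ ᵥ* X) := by
  refine ⟨w₀ + u - v, ?_, risk_lt_of_forall_lt hmono hcash fun t => ?_⟩
  · simp [Finset.sum_sub_distrib, Finset.sum_add_distrib, hw₀, hu, hv]
  · simpa [sub_vecMul, add_vecMul, add_sub_assoc] using hdom t

theorem prob_unfeasible_ge_prob_dominating_pair_general {Ω : Type*} [MeasurableSpace Ω]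
    (P : MeasureTheory.Measure Ω) [MeasureTheory.IsProbabilityMeasure P]
    {N T : ℕ} (hT : 1 ≤ T)
    (R : (Fin T → ℝ) → ℝ) (hR : IsCoherent R)
    (X : Ω → Fin N → Fin T → ℝ) (D U : Set Ω)
    (hD : D = {ω | ∃ u v : Fin N → ℝ, (∑ i, u i = 1) ∧ (∑ i, v i = 1) ∧
        ∀ t, ∑ i, v i * X ω i t < ∑ i, u i * X ω i t})
    (hU : U = {ω | ¬ ∃ w₀ : Fin N → ℝ, (∑ i, w₀ i = 1) ∧
        ∀ w : Fin N → ℝ, (∑ i, w i = 1) →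
          R (fun t => ∑ i, w₀ i * X ω i t) ≤ R (fun t => ∑ i, w i * X ω i t)}) :
    D ⊆ U ∧ (MeasurableSet D → MeasurableSet U → P D ≤ P U) := by
  have : Nonempty (Fin T) := ⟨⟨0, hT⟩⟩
  have hDU : D ⊆ U := by
    subst hD hU
    rintro ω ⟨u, v, hu, hv, hdom⟩ ⟨w₀, hw₀, hmin⟩
    -- `w ᵥ* X ω` is definitionally `fun t => ∑ i, w i * X ω i t`.
    obtain ⟨w, hw, hlt⟩ :=
      exists_risk_lt_of_strictly_dominates hR.1 hR.2.2.2 hu hv hdom w₀ hw₀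
    exact (hmin w hw).not_gt hlt
  exact ⟨hDU, fun _ _ => MeasureTheory.measure_mono hDU⟩

/-- Corollary 2, abstract probabilistic form: for a random sample of returns, the event
`D` that some normalized portfolio strictly dominates another on the sample is contained
in the event `U` that the minimization of the coherent risk estimator over normalized
portfolios has no solution; hence, when these events are measurable, `P D ≤ P U`. -/
theorem prob_unfeasible_ge_prob_dominating_pair {Ω : Type*} [MeasurableSpace Ω]
    (P : MeasureTheory.Measure Ω) [MeasureTheory.IsProbabilityMeasure P]
    {N T : ℕ} (hN : 1 ≤ N) (hT : 1 ≤ T)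
    (R : (Fin T → ℝ) → ℝ) (hR : IsCoherent R)
    (X : Ω → Fin N → Fin T → ℝ) (D U : Set Ω)
    (hD : D = {ω | ∃ u v : Fin N → ℝ, (∑ i, u i = 1) ∧ (∑ i, v i = 1) ∧
        ∀ t, ∑ i, v i * X ω i t < ∑ i, u i * X ω i t})
    (hU : U = {ω | ¬ ∃ w₀ : Fin N → ℝ, (∑ i, w₀ i = 1) ∧
        ∀ w : Fin N → ℝ, (∑ i, w i = 1) →
          R (fun t => ∑ i, w₀ i * X ω i t) ≤ R (fun t => ∑ i, w i * X ω i t)}) :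
    D ⊆ U ∧ (MeasurableSet D → MeasurableSet U → P D ≤ P U) :=
  prob_unfeasible_ge_prob_dominating_pair_general P hT R hR X D U hD hU
end
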